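/- Let S : ℝ² → ℝ² be continuously differentiable with compact support, and assume the Fourier transform F[div S] is integrable on ℝ². Define the indicator I_p(z) := (i/(2π)²) ∫_{S¹} ∫_0^∞ (u_p^∞(x̂,ω)·x̂) e^{i k_p x̂·z} (k_p²/√(λ+2μ)) dω dσ(x̂) for z ∈ ℝ². Then I_p(z) = div S(z) := ∂₁S₁(z) + ∂₂S₂(z) for every z ∈ ℝ². -/

import Mathlib

set_option linter.unusedSectionVars false
set_option maxHeartbeats 1000000


/-!
STATEMENT 3 (first claim of Theorem 2.2, n = 2): the indicator `I_p` built from the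
compressional far field patterns equals `div S`.
-/

open MeasureTheory Real

noncomputable section

namespace ElasticP2D

abbrev E2 := EuclideanSpace ℝ (Fin 2)

/-- Fourier transform of a scalar function on ℝ². -/
def FT (U : E2 → ℂ) (ξ : E2) : ℂ :=
  ∫ x : E2, U x * Complex.exp (-Complex.I * ((∑ i, x i * ξ i : ℝ) : ℂ))

/-- Compressional wavenumber `k_p = ω / √(λ + 2μ)`. -/
def kp (lam mu ω : ℝ) : ℝ := ω / Real.sqrt (lam + 2 * mu)

/-- Compressional far field pattern
`u_p^∞(x̂,ω) := x̂ ∫ e^{-i k_p x̂·y} (S(y)·x̂) dy`. -/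
def up (lam mu : ℝ) (S : E2 → Fin 2 → ℝ) (xhat : E2) (ω : ℝ) : Fin 2 → ℂ :=
  fun j => ((xhat j : ℝ) : ℂ) *
    ∫ y : E2, Complex.exp (-Complex.I * ((kp lam mu ω : ℝ) : ℂ) *
        ((∑ i, xhat i * y i : ℝ) : ℂ)) * ((∑ i, S y i * xhat i : ℝ) : ℂ)

/-- Divergence `div S = ∂₁S₁ + ∂₂S₂`. -/
def divS (S : E2 → Fin 2 → ℝ) (z : E2) : ℝ :=
  ∑ j, fderiv ℝ (fun x => S x j) z (EuclideanSpace.single j (1 : ℝ))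

/-- The indicator
`I_p(z) := (i/(2π)²) ∫_{S¹} ∫_0^∞ (u_p^∞(x̂,ω)·x̂) e^{i k_p x̂·z} (k_p²/√(λ+2μ)) dω dσ(x̂)`. -/
def Ip (lam mu : ℝ) (S : E2 → Fin 2 → ℝ) (z : E2) : ℂ :=
  (Complex.I * (((2 * π) ^ 2 : ℝ) : ℂ)⁻¹) *
    ∫ xhat : Metric.sphere (0 : E2) 1,
      (∫ ω in Set.Ioi (0 : ℝ),
        (∑ j, up lam mu S (xhat : E2) ω j * (((xhat : E2) j : ℝ) : ℂ)) *
          Complex.exp (Complex.I * ((kp lam mu ω : ℝ) : ℂ) *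
            ((∑ i, (xhat : E2) i * z i : ℝ) : ℂ)) *
          ((kp lam mu ω ^ 2 / Real.sqrt (lam + 2 * mu) : ℝ) : ℂ))
      ∂((volume : Measure E2).toSphere)

/-! ### Auxiliary lemmas -/

section aux
open Set Metric FourierTransform RealInnerProductSpace

lemma polar2 (g : E2 → ℂ) (hg : Integrable g) :
    ∫ x, g x = ∫ xh : sphere (0:E2) 1,
      (∫ r in Ioi (0:ℝ), r • g (r • (xh:E2))) ∂((volume : Measure E2).toSphere) := by
  have hdim : Module.finrank ℝ E2 = 2 := by simp
  have h0 : ∫ x, g x = ∫ x in ({0}ᶜ : Set E2), g x := by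
    rw [restrict_compl_singleton]
  have h1 : ∫ x in ({0}ᶜ : Set E2), g x
      = ∫ x : ({0}ᶜ : Set E2), g x ∂((volume : Measure E2).comap (↑)) := by
    rw [integral_subtype_comap (measurableSet_singleton _).compl]
  have hmp := (volume : Measure E2).measurePreserving_homeomorphUnitSphereProd
  set F : sphere (0:E2) 1 × Ioi (0:ℝ) → ℂ := fun p => g ((p.2 : ℝ) • (p.1 : E2)) with hF
  have hcomp : ∀ x : ({0}ᶜ : Set E2), F (homeomorphUnitSphereProd E2 x) = g x := by
    intro x
    simp only [hF, homeomorphUnitSphereProd_apply_fst_coe, homeomorphUnitSphereProd_apply_snd_coe]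
    rw [smul_inv_smul₀ (norm_ne_zero_iff.2 x.2)]
  have h2 : ∫ x : ({0}ᶜ : Set E2), g x ∂((volume : Measure E2).comap (↑))
      = ∫ p, F p ∂(((volume : Measure E2).toSphere).prod (.volumeIoiPow (Module.finrank ℝ E2 - 1))) := by
    rw [← hmp.integral_comp (Homeomorph.measurableEmbedding _) F]
    exact integral_congr_ae (Filter.Eventually.of_forall (fun x => (hcomp x).symm))
  have hemb := MeasurableEmbedding.subtype_coe (measurableSet_singleton (0:E2)).compl
  have hgint : Integrable (fun x : ({0}ᶜ : Set E2) => g x) ((volume : Measure E2).comap (↑)) := by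
    have : Integrable g (Measure.map (Subtype.val : ({0}ᶜ : Set E2) → E2)
        ((volume : Measure E2).comap (Subtype.val))) := by
      rw [hemb.map_comap, Subtype.range_coe, restrict_compl_singleton]
      exact hg
    exact (hemb.integrable_map_iff.mp this : _)
  have hFint : Integrable F (((volume : Measure E2).toSphere).prod
      (.volumeIoiPow (Module.finrank ℝ E2 - 1))) := by
    rw [← hmp.integrable_comp_emb (Homeomorph.measurableEmbedding _)]
    exact hgint.congr (Filter.Eventually.of_forall fun x => (hcomp x).symm)
  rw [h0, h1, h2, integral_prod _ hFint]
  refine integral_congr_ae (Filter.Eventually.of_forall fun xh => ?_)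
  calc ∫ r : Ioi (0:ℝ), F (xh, r) ∂(Measure.volumeIoiPow (Module.finrank ℝ E2 - 1))
      = ∫ r in Ioi (0:ℝ), (r ^ (Module.finrank ℝ E2 - 1)).toNNReal • g (r • (xh:E2)) := by
        simp only [Measure.volumeIoiPow, ENNReal.ofReal]
        rw [integral_withDensity_eq_integral_smul
          ((measurable_subtype_coe.pow_const _).real_toNNReal),
          integral_subtype_comap measurableSet_Ioi
            (fun a : ℝ => (a ^ (Module.finrank ℝ E2 - 1)).toNNReal • g (a • (xh:E2)))]
    _ = ∫ r in Ioi (0:ℝ), r • g (r • (xh:E2)) := by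
        refine setIntegral_congr_fun measurableSet_Ioi fun r hr => ?_
        rw [hdim, NNReal.smul_def, Real.coe_toNNReal _ (pow_nonneg hr.out.le _)]
        norm_num

variable {S : E2 → Fin 2 → ℝ} (hS : ContDiff ℝ 1 S) (hS_supp : HasCompactSupport S)

section basic
include hS hS_supp

lemma hSj (j : Fin 2) : ContDiff ℝ 1 (fun x => S x j) := (contDiff_pi.1 hS) j

lemma hSuppj (j : Fin 2) : HasCompactSupport (fun x => S x j) :=
  hS_supp.comp_left (g := fun v : Fin 2 → ℝ => v j) rfl

lemma fj_cd (j : Fin 2) : ContDiff ℝ 1 (fun x => ((S x j : ℝ) : ℂ)) :=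
  Complex.ofRealCLM.contDiff.comp (hSj hS hS_supp j)

lemma fj_supp (j : Fin 2) : HasCompactSupport (fun x => ((S x j : ℝ) : ℂ)) :=
  (hSuppj hS hS_supp j).comp_left (g := fun r : ℝ => (r : ℂ)) rfl

lemma fj_int (j : Fin 2) : Integrable (fun x => ((S x j : ℝ) : ℂ)) :=
  ((fj_cd hS hS_supp j).continuous).integrable_of_hasCompactSupport (fj_supp hS hS_supp j)

lemma fderiv_fj (j : Fin 2) (x : E2) :
    fderiv ℝ (fun x => ((S x j : ℝ) : ℂ)) x
      = Complex.ofRealCLM.comp (fderiv ℝ (fun x => S x j) x) := by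
  have h1 : HasFDerivAt (fun x => S x j) (fderiv ℝ (fun x => S x j) x) x :=
    ((hSj hS hS_supp j).differentiable one_ne_zero).differentiableAt.hasFDerivAt
  exact (Complex.ofRealCLM.hasFDerivAt.comp x h1).fderiv

lemma fderivSj_cont (j : Fin 2) : Continuous (fun x => fderiv ℝ (fun x => S x j) x) :=
  (hSj hS hS_supp j).continuous_fderiv one_ne_zero

lemma fderivSj_supp (j : Fin 2) : HasCompactSupport (fun x => fderiv ℝ (fun x => S x j) x) :=
  (hSuppj hS hS_supp j).fderiv (𝕜 := ℝ)

lemma fderivfj_int (j : Fin 2) : Integrable (fderiv ℝ (fun x => ((S x j : ℝ) : ℂ))) := by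
  have hc : Continuous (fun x => fderiv ℝ (fun x => ((S x j : ℝ) : ℂ)) x) := by
    simp only [fderiv_fj hS hS_supp j]
    exact (ContinuousLinearMap.compL ℝ E2 ℝ ℂ Complex.ofRealCLM).continuous.comp
      (fderivSj_cont hS hS_supp j)
  have hsupp : HasCompactSupport (fun x => fderiv ℝ (fun x => ((S x j : ℝ) : ℂ)) x) := by
    have := (fderivSj_supp hS hS_supp j).comp_left
      (g := fun L : E2 →L[ℝ] ℝ => Complex.ofRealCLM.comp L) (by simp)
    have he : (fun x => fderiv ℝ (fun x => ((S x j : ℝ) : ℂ)) x)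
        = ((fun L : E2 →L[ℝ] ℝ => Complex.ofRealCLM.comp L) ∘ fun x => fderiv ℝ (fun x => S x j) x) :=
      funext fun x => fderiv_fj hS hS_supp j x
    rw [he]; exact this
  exact hc.integrable_of_hasCompactSupport hsupp

lemma div_cont : Continuous (fun x => ∑ j, fderiv ℝ (fun x => S x j) x (EuclideanSpace.single j (1:ℝ))) := by
  refine continuous_finset_sum _ fun j _ => ?_
  exact (ContinuousLinearMap.apply ℝ ℝ (EuclideanSpace.single j (1:ℝ))).continuous.comp
    (fderivSj_cont hS hS_supp j)

lemma divterm_supp (j : Fin 2) :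
    HasCompactSupport (fun x => ((fderiv ℝ (fun x => S x j) x (EuclideanSpace.single j (1:ℝ)) : ℝ) : ℂ)) := by
  have := (fderivSj_supp hS hS_supp j).comp_left
    (g := fun L : E2 →L[ℝ] ℝ => ((L (EuclideanSpace.single j (1:ℝ)) : ℝ) : ℂ)) (by simp)
  exact this

lemma divterm_int (j : Fin 2) :
    Integrable (fun x => ((fderiv ℝ (fun x => S x j) x (EuclideanSpace.single j (1:ℝ)) : ℝ) : ℂ)) := by
  refine Continuous.integrable_of_hasCompactSupport ?_ (divterm_supp hS hS_supp j)
  exact Complex.continuous_ofReal.comp ((ContinuousLinearMap.apply ℝ ℝ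
    (EuclideanSpace.single j (1:ℝ))).continuous.comp (fderivSj_cont hS hS_supp j))

lemma fourier_term (j : Fin 2) (w : E2) :
    𝓕 (fun x => ((fderiv ℝ (fun x => S x j) x (EuclideanSpace.single j (1:ℝ)) : ℝ) : ℂ)) w
      = (2 * π * Complex.I) * (w j : ℂ) * 𝓕 (fun x => ((S x j : ℝ) : ℂ)) w := by
  have hdiff : Differentiable ℝ (fun x => ((S x j : ℝ) : ℂ)) :=
    (fj_cd hS hS_supp j).differentiable one_ne_zero
  have hkey := Real.fourier_fderiv (fj_int hS hS_supp j) hdiff (fderivfj_int hS hS_supp j)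
  have happ := congrFun hkey w
  have hL : (𝓕 (fderiv ℝ (fun x => ((S x j : ℝ) : ℂ))) w) (EuclideanSpace.single j (1:ℝ))
      = 𝓕 (fun x => ((fderiv ℝ (fun x => S x j) x (EuclideanSpace.single j (1:ℝ)) : ℝ) : ℂ)) w := by
    rw [Real.fourier_eq]
    rw [ContinuousLinearMap.integral_apply]
    · rw [Real.fourier_eq]
      congr 1
      ext v
      rw [Circle.smul_def, ContinuousLinearMap.smul_apply, fderiv_fj hS hS_supp j]
      rfl
    · exact (Real.fourierIntegral_convergent_iff w).2 (fderivfj_int hS hS_supp j)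
  rw [← hL, happ]
  rw [VectorFourier.fourierSMulRight_apply]
  have hinner : ⟪w, EuclideanSpace.single j (1:ℝ)⟫ = w j := by
    simp [EuclideanSpace.inner_single_right]
  simp only [ContinuousLinearMap.neg_apply, innerSL_apply_apply, hinner]
  simp only [neg_smul, smul_neg, neg_neg, smul_smul, Complex.real_smul, smul_eq_mul]
  rw [innerSL_apply_apply, hinner]
  push_cast
  ring

lemma fourier_div (w : E2) :
    𝓕 (fun x => ((∑ j, fderiv ℝ (fun x => S x j) x (EuclideanSpace.single j (1:ℝ)) : ℝ) : ℂ)) w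
      = (2 * π * Complex.I) * ∑ j, (w j : ℂ) * 𝓕 (fun x => ((S x j : ℝ) : ℂ)) w := by
  have hsum : (fun x => ((∑ j, fderiv ℝ (fun x => S x j) x (EuclideanSpace.single j (1:ℝ)) : ℝ) : ℂ))
      = fun x => ∑ j, ((fderiv ℝ (fun x => S x j) x (EuclideanSpace.single j (1:ℝ)) : ℝ) : ℂ) := by
    ext x; push_cast; ring
  rw [hsum]
  have hsplit : 𝓕 (fun x => ∑ j, ((fderiv ℝ (fun x => S x j) x (EuclideanSpace.single j (1:ℝ)) : ℝ) : ℂ)) w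
      = ∑ j, 𝓕 (fun x => ((fderiv ℝ (fun x => S x j) x (EuclideanSpace.single j (1:ℝ)) : ℝ) : ℂ)) w := by
    simp only [Real.fourier_eq, Finset.smul_sum]
    rw [integral_finset_sum]
    intro j _
    exact (Real.fourierIntegral_convergent_iff w).2 (divterm_int hS hS_supp j)
  rw [hsplit, Finset.mul_sum]
  refine Finset.sum_congr rfl fun j _ => ?_
  rw [fourier_term hS hS_supp j w]
  ring

end basic

lemma FT_eq_fourier (U : E2 → ℂ) (w : E2) : FT U ((2 * π) • w) = 𝓕 U w := by
  rw [Real.fourier_eq', FT]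
  refine integral_congr_ae (Filter.Eventually.of_forall fun v => ?_)
  simp only [smul_eq_mul]
  rw [mul_comm]
  congr 1
  have h1 : (∑ i, v i * ((2 * π) • w) i) = 2 * π * ⟪v, w⟫ := by
    simp only [PiLp.smul_apply, smul_eq_mul, PiLp.inner_apply, RCLike.inner_apply, conj_trivial]
    rw [Finset.mul_sum]
    exact Finset.sum_congr rfl fun i _ => by ring
  rw [h1]
  push_cast
  ring

include hS hS_supp in
lemma FT_div (ξ : E2) :
    FT (fun y => ((∑ j, fderiv ℝ (fun x => S x j) y (EuclideanSpace.single j (1:ℝ)) : ℝ) : ℂ)) ξ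
      = Complex.I * ∑ j, (ξ j : ℂ) * FT (fun y => ((S y j : ℝ) : ℂ)) ξ := by
  have h2π : (2 * π) ≠ 0 := by positivity
  have hξ : (2 * π) • ((2 * π)⁻¹ • ξ) = ξ := by rw [smul_smul, mul_inv_cancel₀ h2π, one_smul]
  have h1 := FT_eq_fourier
    (fun y => ((∑ j, fderiv ℝ (fun x => S x j) y (EuclideanSpace.single j (1:ℝ)) : ℝ) : ℂ))
    ((2 * π)⁻¹ • ξ)
  rw [hξ] at h1
  rw [h1, fourier_div hS hS_supp]
  rw [Finset.mul_sum, Finset.mul_sum]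
  refine Finset.sum_congr rfl fun j _ => ?_
  have h2 := FT_eq_fourier (fun y => ((S y j : ℝ) : ℂ)) ((2 * π)⁻¹ • ξ)
  rw [hξ] at h2
  rw [← h2]
  have h3 : (((2 * π)⁻¹ • ξ) j : ℂ) = ((2 * π : ℝ) : ℂ)⁻¹ * (ξ j : ℂ) := by
    simp [PiLp.smul_apply]
  rw [h3]
  have h4 : ((2:ℂ) * π) ≠ 0 := by
    simp only [ne_eq, mul_eq_zero, OfNat.ofNat_ne_zero, Complex.ofReal_eq_zero, false_or]
    exact_mod_cast Real.pi_ne_zero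
  push_cast
  field_simp

lemma inversion (f : E2 → ℂ) (hc : Continuous f) (hint : Integrable f)
    (hFT : Integrable (FT f)) (z : E2) :
    ((((2 * π) ^ 2 : ℝ)) : ℂ)⁻¹ *
      ∫ ξ : E2, FT f ξ * Complex.exp (Complex.I * ((∑ i, ξ i * z i : ℝ) : ℂ)) = f z := by
  have h2π : (2 * π : ℝ) ≠ 0 := by positivity
  have hFeq : ∀ v, 𝓕 f v = FT f ((2 * π) • v) := fun v => (FT_eq_fourier f v).symm
  have h𝓕int : Integrable (𝓕 f) := by
    refine (hFT.comp_smul h2π).congr (Filter.Eventually.of_forall fun v => ?_)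
    exact (hFeq v).symm
  set H : E2 → ℂ := fun ξ => FT f ξ * Complex.exp (Complex.I * ((∑ i, ξ i * z i : ℝ) : ℂ)) with hH
  have hdim : Module.finrank ℝ E2 = 2 := by simp
  have hscale := MeasureTheory.Measure.integral_comp_smul (volume : Measure E2) H (2 * π)
  rw [hdim] at hscale
  have habs : |(((2 * π : ℝ)) ^ 2)⁻¹| = (((2 * π : ℝ)) ^ 2)⁻¹ := by
    rw [abs_of_pos]; positivity
  rw [habs] at hscale
  have hinv : ∫ v : E2, H ((2 * π) • v) = 𝓕⁻ (𝓕 f) z := by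
    rw [Real.fourierInv_eq']
    refine integral_congr_ae (Filter.Eventually.of_forall fun v => ?_)
    simp only [hH, smul_eq_mul]
    rw [← hFeq v, mul_comm]
    congr 2
    have : (∑ i, ((2 * π) • v) i * z i) = 2 * π * ⟪v, z⟫ := by
      simp only [PiLp.smul_apply, smul_eq_mul, PiLp.inner_apply, RCLike.inner_apply, conj_trivial]
      rw [Finset.mul_sum]
      exact Finset.sum_congr rfl fun i _ => by ring
    rw [this]
    push_cast
    ring
  have hfin := hint.fourierInv_fourier_eq h𝓕int hc.continuousAt (v := z)
  rw [← hfin, ← hinv, hscale, Complex.real_smul]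
  norm_cast

end aux

theorem indicator_p_eq_div (lam mu : ℝ) (hmu : 0 < mu) (hlm : 0 < 2 * mu + lam)
    (S : E2 → Fin 2 → ℝ) (hS : ContDiff ℝ 1 S) (hS_supp : HasCompactSupport S)
    (hFT : Integrable (FT (fun y => ((divS S y : ℝ) : ℂ))))
    (z : E2) :
    Ip lam mu S z = ((divS S z : ℝ) : ℂ) := by
  classical
  rw [Ip]
  set c := Real.sqrt (lam + 2 * mu) with hcdef
  have hc : 0 < c := Real.sqrt_pos.2 (by linarith)
  set f : E2 → ℂ := fun y => ((divS S y : ℝ) : ℂ) with hf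
  have hfeq : f = fun y =>
      ((∑ j, fderiv ℝ (fun x => S x j) y (EuclideanSpace.single j (1:ℝ)) : ℝ) : ℂ) := rfl
  have hfc : Continuous f := by
    rw [hfeq]; exact Complex.continuous_ofReal.comp (div_cont hS hS_supp)
  have hfsupp : HasCompactSupport f := by
    have he : f = fun x =>
        (((fderiv ℝ (fun y => S y 0) x (EuclideanSpace.single 0 (1:ℝ)) : ℝ)) : ℂ)
        + (((fderiv ℝ (fun y => S y 1) x (EuclideanSpace.single 1 (1:ℝ)) : ℝ)) : ℂ) := by
      funext x
      simp only [hfeq, Fin.sum_univ_two]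
      push_cast
      ring
    rw [he]
    exact (divterm_supp hS hS_supp 0).add (divterm_supp hS hS_supp 1)
  have hfint : Integrable f := hfc.integrable_of_hasCompactSupport hfsupp
  set H : E2 → ℂ := fun ξ => FT f ξ * Complex.exp (Complex.I * ((∑ i, ξ i * z i : ℝ) : ℂ)) with hH
  have hexp_cont : Continuous fun ξ : E2 => Complex.exp (Complex.I * ((∑ i, ξ i * z i : ℝ) : ℂ)) := by
    apply Complex.continuous_exp.comp
    apply Continuous.mul continuous_const
    apply Complex.continuous_ofReal.comp
    exact continuous_finset_sum _ fun i _ =>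
      ((continuous_apply i).comp (PiLp.continuous_ofLp 2 fun _ : Fin 2 => ℝ)).mul continuous_const
  have hHint : Integrable H := by
    refine Integrable.mono' hFT.norm (hFT.1.mul hexp_cont.aestronglyMeasurable)
      (Filter.Eventually.of_forall fun ξ => ?_)
    rw [hH]
    rw [norm_mul]
    have h1 : ‖Complex.exp (Complex.I * ((∑ i, ξ i * z i : ℝ) : ℂ))‖ = 1 := by
      rw [Complex.norm_exp]; simp
    rw [h1, mul_one]
  have key : ∀ xh : Metric.sphere (0:E2) 1,
      (∫ ω in Set.Ioi (0:ℝ),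
        (∑ j, up lam mu S (xh : E2) ω j * (((xh : E2) j : ℝ) : ℂ)) *
          Complex.exp (Complex.I * ((kp lam mu ω : ℝ) : ℂ) *
            ((∑ i, (xh : E2) i * z i : ℝ) : ℂ)) *
          ((kp lam mu ω ^ 2 / c : ℝ) : ℂ))
      = Complex.I⁻¹ * ∫ r in Set.Ioi (0:ℝ), r • H (r • (xh : E2)) := by
    intro xh
    have hxe : ‖(xh : E2)‖ = 1 := mem_sphere_zero_iff_norm.mp xh.2
    have hx1 : (∑ i, ((xh : E2) i)^2 : ℝ) = 1 := by
      have h2 : Real.sqrt (∑ i, ((xh : E2) i) ^ 2) = 1 := by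
        have hne : ‖(xh : E2)‖ = Real.sqrt (∑ i, ((xh : E2) i) ^ 2) := by
          rw [EuclideanSpace.norm_eq]
          congr 1
          exact Finset.sum_congr rfl fun i _ => by rw [Real.norm_eq_abs, sq_abs]
        rw [← hne, hxe]
      have h3 := Real.sq_sqrt (show (0:ℝ) ≤ ∑ i, ((xh : E2) i)^2 from
        Finset.sum_nonneg fun i _ => sq_nonneg _)
      rw [h2] at h3; simpa using h3.symm
    set B : ℝ → ℂ := fun k => ∫ y : E2, Complex.exp (-Complex.I * (k : ℂ) *
        ((∑ i, (xh : E2) i * y i : ℝ) : ℂ)) * ((∑ i, S y i * (xh : E2) i : ℝ) : ℂ) with hB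
    set G : ℝ → ℂ := fun k => B k * Complex.exp (Complex.I * (k : ℂ) *
        ((∑ i, (xh : E2) i * z i : ℝ) : ℂ)) * (k : ℂ)^2 with hG
    have hpt : ∀ ω : ℝ, (∑ j, up lam mu S (xh : E2) ω j * (((xh : E2) j : ℝ) : ℂ)) *
          Complex.exp (Complex.I * ((kp lam mu ω : ℝ) : ℂ) * ((∑ i, (xh : E2) i * z i : ℝ) : ℂ)) *
          ((kp lam mu ω ^ 2 / c : ℝ) : ℂ)
        = c⁻¹ • G (c⁻¹ * ω) := by
      intro ω
      have h1 : (∑ j, up lam mu S (xh : E2) ω j * (((xh : E2) j : ℝ) : ℂ)) = B (kp lam mu ω) := by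
        have hterm : ∀ j, up lam mu S (xh : E2) ω j * (((xh : E2) j : ℝ) : ℂ)
            = ((((xh : E2) j : ℝ) : ℂ))^2 * B (kp lam mu ω) := fun j => by
          rw [show up lam mu S (xh : E2) ω j
            = (((xh : E2) j : ℝ) : ℂ) * B (kp lam mu ω) from rfl]
          ring
        rw [Finset.sum_congr rfl fun j _ => hterm j, ← Finset.sum_mul]
        have h5 : (∑ j, ((((xh : E2) j : ℝ) : ℂ))^2) = ((∑ j, ((xh : E2) j)^2 : ℝ) : ℂ) := by
          push_cast; ring
        rw [h5, hx1]
        simp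
      have h2 : kp lam mu ω = c⁻¹ * ω := by rw [kp, ← hcdef, div_eq_inv_mul]
      rw [h1, h2, hG, Complex.real_smul]
      push_cast
      ring
    calc (∫ ω in Set.Ioi (0:ℝ),
        (∑ j, up lam mu S (xh : E2) ω j * (((xh : E2) j : ℝ) : ℂ)) *
          Complex.exp (Complex.I * ((kp lam mu ω : ℝ) : ℂ) *
            ((∑ i, (xh : E2) i * z i : ℝ) : ℂ)) *
          ((kp lam mu ω ^ 2 / c : ℝ) : ℂ))
        = ∫ ω in Set.Ioi (0:ℝ), c⁻¹ • G (c⁻¹ * ω) :=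
          setIntegral_congr_fun measurableSet_Ioi fun ω _ => hpt ω
      _ = c⁻¹ • ∫ ω in Set.Ioi (0:ℝ), G (c⁻¹ * ω) := integral_smul _ _
      _ = c⁻¹ • ((c⁻¹)⁻¹ • ∫ k in Set.Ioi (c⁻¹ * 0), G k) := by
          rw [integral_comp_mul_left_Ioi G 0 (inv_pos.2 hc)]
      _ = ∫ k in Set.Ioi (0:ℝ), G k := by
          rw [inv_inv, mul_zero, inv_smul_smul₀ hc.ne']
      _ = ∫ k in Set.Ioi (0:ℝ), Complex.I⁻¹ * (k • H (k • (xh : E2))) := by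
          refine integral_congr_ae (Filter.Eventually.of_forall fun k => ?_)
          have hBexp : B k = ∑ j, FT (fun y => ((S y j : ℝ) : ℂ)) (k • (xh : E2))
              * (((xh : E2) j : ℝ) : ℂ) := by
            have hexps : ∀ y : E2, (∑ i, y i * ((k • (xh : E2)) i)) = k * (∑ i, (xh : E2) i * y i) := by
              intro y
              simp only [PiLp.smul_apply, smul_eq_mul]
              rw [Finset.mul_sum]
              exact Finset.sum_congr rfl fun i _ => by ring
            have hint_j : ∀ j : Fin 2, Integrable (fun y : E2 =>
                Complex.exp (-Complex.I * (k : ℂ) * ((∑ i, (xh : E2) i * y i : ℝ) : ℂ))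
                  * ((S y j : ℝ) : ℂ) * (((xh : E2) j : ℝ) : ℂ)) := by
              intro j
              apply Integrable.mul_const
              refine Integrable.bdd_mul (fj_int hS hS_supp j) ?_ (c := 1) (Filter.Eventually.of_forall fun y => ?_)
              · refine (Complex.continuous_exp.comp ?_).aestronglyMeasurable
                refine Continuous.mul continuous_const ?_
                refine Complex.continuous_ofReal.comp ?_
                exact continuous_finset_sum _ fun i _ => continuous_const.mul
                  ((continuous_apply i).comp (PiLp.continuous_ofLp 2 fun _ : Fin 2 => ℝ))
              · rw [Complex.norm_exp]
                simp
            rw [hB]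
            calc (∫ y : E2, Complex.exp (-Complex.I * (k : ℂ) *
                ((∑ i, (xh : E2) i * y i : ℝ) : ℂ)) * ((∑ i, S y i * (xh : E2) i : ℝ) : ℂ))
                = ∫ y : E2, ∑ j, Complex.exp (-Complex.I * (k : ℂ) *
                    ((∑ i, (xh : E2) i * y i : ℝ) : ℂ)) * ((S y j : ℝ) : ℂ) * (((xh : E2) j : ℝ) : ℂ) := by
                  refine integral_congr_ae (Filter.Eventually.of_forall fun y => ?_)
                  push_cast
                  rw [Finset.mul_sum]
                  exact Finset.sum_congr rfl fun j _ => by ring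
              _ = ∑ j, ∫ y : E2, Complex.exp (-Complex.I * (k : ℂ) *
                    ((∑ i, (xh : E2) i * y i : ℝ) : ℂ)) * ((S y j : ℝ) : ℂ) * (((xh : E2) j : ℝ) : ℂ) :=
                  integral_finset_sum _ fun j _ => hint_j j
              _ = ∑ j, FT (fun y => ((S y j : ℝ) : ℂ)) (k • (xh : E2)) * (((xh : E2) j : ℝ) : ℂ) := by
                  refine Finset.sum_congr rfl fun j _ => ?_
                  rw [integral_mul_const]
                  congr 1
                  rw [FT]
                  refine integral_congr_ae (Filter.Eventually.of_forall fun y => ?_)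
                  show Complex.exp (-Complex.I * (k : ℂ) * ((∑ i, (xh : E2) i * y i : ℝ) : ℂ))
                        * ((S y j : ℝ) : ℂ)
                      = ((S y j : ℝ) : ℂ) * Complex.exp (-Complex.I *
                        ((∑ i, y i * ((k • (xh : E2)) i) : ℝ) : ℂ))
                  rw [mul_comm]
                  congr 2
                  rw [hexps y]
                  push_cast
                  ring
          have hBk : FT f (k • (xh : E2)) = Complex.I * (k : ℂ) * B k := by
            rw [hfeq, FT_div hS hS_supp, hBexp, mul_assoc]
            congr 1
            rw [Finset.mul_sum]
            refine Finset.sum_congr rfl fun j _ => ?_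
            simp only [PiLp.smul_apply, smul_eq_mul]
            push_cast
            ring
          have hsz : (∑ i, ((k • (xh : E2)) i) * z i) = k * ∑ i, (xh : E2) i * z i := by
            simp only [PiLp.smul_apply, smul_eq_mul]
            rw [Finset.mul_sum]
            exact Finset.sum_congr rfl fun i _ => by ring
          have hHk : H (k • (xh : E2)) = FT f (k • (xh : E2)) *
              Complex.exp (Complex.I * (k : ℂ) * ((∑ i, (xh : E2) i * z i : ℝ) : ℂ)) := by
            simp only [hH]
            have harg : (Complex.I * ((∑ i, ((k • (xh : E2)) i) * z i : ℝ) : ℂ))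
                = Complex.I * (k : ℂ) * ((∑ i, (xh : E2) i * z i : ℝ) : ℂ) := by
              rw [hsz]; push_cast; ring
            rw [harg]
          beta_reduce
          rw [hHk, hBk, Complex.real_smul, Complex.inv_I]
          ring_nf
          rw [Complex.I_sq]
          ring
      _ = Complex.I⁻¹ * ∫ r in Set.Ioi (0:ℝ), r • H (r • (xh : E2)) := integral_const_mul _ _
  rw [integral_congr_ae (Filter.Eventually.of_forall key), integral_const_mul, ← polar2 H hHint]
  have hIH : Complex.I * ((((2 * π) ^ 2 : ℝ)) : ℂ)⁻¹ * (Complex.I⁻¹ * ∫ x, H x)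
      = ((((2 * π) ^ 2 : ℝ)) : ℂ)⁻¹ * ∫ x, H x := by
    have hI := Complex.I_ne_zero
    field_simp
  rw [hIH, hH]
  exact inversion f hfc hfint hFT z

end ElasticP2D

end
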